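/- Let p > 1 and let η satisfy 1/(p+1) < η < 1. For a ∈ (0,1) define g_a : [0,1] → ℝ by g_a(x) = (p+1)a^{−p}(a−x)^p for 0 ≤ x ≤ a and g_a(x) = (p+1)(1−a)^{−p}(x−a)^p for a ≤ x ≤ 1, and define T_a : [0,1] → [0,1] by T_a(y) = a(1 − (1 − y/a)^{1/(p+1)}) for 0 ≤ y ≤ a and T_a(y) = a + (1−a)((y−a)/(1−a))^{1/(p+1)} for a ≤ y ≤ 1. Then for every C > 0 there exists a ∈ (0,1) such that sup_{y ∈ [0,1]} |T_a(y) − T_{1/2}(y)| > C·( sup_{x ∈ [0,1]} |g_a(x) − g_{1/2}(x)| )^η. In particular, no uniform η-Hölder stability estimate ‖T_a − T_{1/2}‖_{L^∞} ≤ C‖g_a − g_{1/2}‖_{L^∞}^η can hold when the target densities are allowed to vanish at a point. -/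

import Mathlib

/-- The target density `g_a` of the sharpness example: on `[0,1]`,
`g_a(x) = (p+1)a^{-p}(a-x)^p` for `x ≤ a` and `(p+1)(1-a)^{-p}(x-a)^p` for `x ≥ a`. -/
noncomputable def gfun (p a : ℝ) (x : ℝ) : ℝ :=
  if x ≤ a then (p + 1) * a ^ (-p) * (a - x) ^ p
  else (p + 1) * (1 - a) ^ (-p) * (x - a) ^ p

/-- The transport map `T_a` of the sharpness example (the inverse of the cumulative
distribution function of `g_a`). -/
noncomputable def Tfun (p a : ℝ) (y : ℝ) : ℝ :=
  if y ≤ a then a * (1 - (1 - y / a) ^ (1 / (p + 1)))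
  else a + (1 - a) * ((y - a) / (1 - a)) ^ (1 / (p + 1))

/-! With `a = 1/2 + ε` the densities stay `O(ε)`-close: both are `(p + 1) d ^ p` for normalised
distances `d` to the minimum point which move by at most `2ε`, and `t ↦ t ^ p` is `p`-Lipschitz on
`[0, 1]`. The transport maps, however, differ by about `(2ε) ^ (1/(p+1)) / 2` at `y = a`, since
`T_a(a) = a` while `T_{1/2}` leaves `1/2` with infinite slope. As `1/(p+1) < η`, the right-hand side
`C (Kε) ^ η` of the Hölder estimate is eventually smaller. -/

open Real Filter Topology Set

lemma rpow_sub_rpow_le_mul_sub {p u v : ℝ} (hp : 1 ≤ p) (hv : 0 ≤ v) (hvu : v ≤ u) (hu : u ≤ 1) :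
    u ^ p - v ^ p ≤ p * (u - v) := by
  obtain rfl | hu0 := (hv.trans hvu).eq_or_lt
  · obtain rfl : v = 0 := le_antisymm hvu hv
    simp
  -- Bernoulli applied to `t = v / u`, then `u ^ p ≤ u`.
  set t := v / u
  have ht0 : 0 ≤ t := div_nonneg hv hu0.le
  have ht1 : t ≤ 1 := div_le_one_of_le₀ hvu hu0.le
  have hbern : 1 + p * (t - 1) ≤ t ^ p := by
    simpa using one_add_mul_self_le_rpow_one_add (by linarith : (-1 : ℝ) ≤ t - 1) hp
  have hv_eq : v ^ p = t ^ p * u ^ p := by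
    rw [← mul_rpow ht0 hu0.le, div_mul_cancel₀ v hu0.ne']
  have hup : u ^ p ≤ u := by
    simpa using rpow_le_rpow_of_exponent_ge hu0 hu hp
  have hup0 : 0 ≤ u ^ p := rpow_nonneg hu0.le p
  have htu : u - v = u * (1 - t) := by
    simp only [t]; field_simp
  rw [hv_eq, htu]
  nlinarith [mul_le_mul_of_nonneg_left hbern hup0,
    mul_le_mul_of_nonneg_right hup (by nlinarith : 0 ≤ p * (1 - t))]

lemma abs_rpow_sub_rpow_le {p u v : ℝ} (hp : 1 ≤ p) (hu : u ∈ Icc (0 : ℝ) 1)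
    (hv : v ∈ Icc (0 : ℝ) 1) : |u ^ p - v ^ p| ≤ p * |u - v| := by
  rcases le_total v u with hvu | huv
  · rw [abs_of_nonneg (sub_nonneg.2 (rpow_le_rpow hv.1 hvu (by linarith))),
      abs_of_nonneg (sub_nonneg.2 hvu)]
    exact rpow_sub_rpow_le_mul_sub hp hv.1 hvu hu.2
  · rw [abs_sub_comm, abs_sub_comm u,
      abs_of_nonneg (sub_nonneg.2 (rpow_le_rpow hu.1 huv (by linarith))),
      abs_of_nonneg (sub_nonneg.2 huv)]
    exact rpow_sub_rpow_le_mul_sub hp hu.1 huv hv.2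

noncomputable def scaledDist (a x : ℝ) : ℝ :=
  if x ≤ a then (a - x) / a else (x - a) / (1 - a)

lemma gfun_eq_mul_scaledDist_rpow {p a : ℝ} (x : ℝ) (ha₀ : 0 < a) (ha₁ : a < 1) :
    gfun p a x = (p + 1) * scaledDist a x ^ p := by
  unfold gfun scaledDist
  split_ifs with hx
  · rw [div_rpow (by linarith) ha₀.le, rpow_neg ha₀.le]; ring
  · rw [div_rpow (by linarith) (by linarith), rpow_neg (by linarith)]; ring

lemma scaledDist_mem_Icc {a x : ℝ} (ha₀ : 0 < a) (ha₁ : a < 1) (hx : x ∈ Icc (0 : ℝ) 1) :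
    scaledDist a x ∈ Icc (0 : ℝ) 1 := by
  have := hx.1; have := hx.2
  unfold scaledDist
  split_ifs with hxa
  · exact ⟨div_nonneg (by linarith) ha₀.le, (div_le_one ha₀).2 (by linarith)⟩
  · exact ⟨div_nonneg (by linarith) (by linarith), (div_le_one (by linarith)).2 (by linarith)⟩

lemma abs_scaledDist_sub_le {ε x : ℝ} (hε₀ : 0 ≤ ε) (hε : ε < 1 / 2) (hx : x ∈ Icc (0 : ℝ) 1) :
    |scaledDist (1 / 2 + ε) x - scaledDist (1 / 2) x| ≤ 2 * ε := by
  have := hx.1; have := hx.2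
  unfold scaledDist
  split_ifs with hxa hx_half hx_half
  · have : (1 / 2 + ε - x) / (1 / 2 + ε) - (1 / 2 - x) / (1 / 2) = 2 * ε * x / (1 / 2 + ε) := by
      field_simp; ring
    rw [this, abs_of_nonneg (by positivity), div_le_iff₀ (by linarith)]
    nlinarith
  · refine abs_sub_le_of_nonneg_of_le (div_nonneg (by linarith) (by linarith)) ?_
      (div_nonneg (by linarith) (by norm_num)) (by rw [div_le_iff₀ (by norm_num)]; linarith)
    rw [div_le_iff₀ (by linarith)]
    nlinarith
  · linarith
  · have : (x - (1 / 2 + ε)) / (1 - (1 / 2 + ε)) - (x - 1 / 2) / (1 - 1 / 2) =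
        -(2 * ε * (1 - x) / (1 / 2 - ε)) := by
      rw [show 1 - (1 / 2 + ε) = 1 / 2 - ε by ring, eq_neg_iff_add_eq_zero,
        div_sub_div _ _ (by linarith) (by norm_num), div_add_div _ _ (by positivity) (by linarith),
        div_eq_zero_iff]
      left; ring
    rw [this, abs_neg, abs_of_nonneg (div_nonneg (by nlinarith) (by linarith)),
      div_le_iff₀ (by linarith)]
    nlinarith

lemma abs_gfun_sub_le {p ε x : ℝ} (hp : 1 ≤ p) (hε₀ : 0 ≤ ε) (hε : ε < 1 / 2)
    (hx : x ∈ Icc (0 : ℝ) 1) :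
    |gfun p (1 / 2 + ε) x - gfun p (1 / 2) x| ≤ 2 * p * (p + 1) * ε := by
  have ha₀ : (0 : ℝ) < 1 / 2 + ε := by linarith
  have ha₁ : 1 / 2 + ε < 1 := by linarith
  rw [gfun_eq_mul_scaledDist_rpow x ha₀ ha₁,
    gfun_eq_mul_scaledDist_rpow x (by norm_num) (by norm_num), ← mul_sub, abs_mul,
    abs_of_pos (by linarith)]
  calc (p + 1) * |scaledDist (1 / 2 + ε) x ^ p - scaledDist (1 / 2) x ^ p|
      ≤ (p + 1) * (p * |scaledDist (1 / 2 + ε) x - scaledDist (1 / 2) x|) := by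
        gcongr
        exact abs_rpow_sub_rpow_le hp (scaledDist_mem_Icc ha₀ ha₁ hx)
          (scaledDist_mem_Icc (by norm_num) (by norm_num) hx)
    _ ≤ (p + 1) * (p * (2 * ε)) := by gcongr; exact abs_scaledDist_sub_le hε₀ hε hx
    _ = 2 * p * (p + 1) * ε := by ring

lemma Tfun_mem_Icc {p a y : ℝ} (hp : 0 < p + 1) (ha₀ : 0 < a) (ha₁ : a < 1)
    (hy : y ∈ Icc (0 : ℝ) 1) : Tfun p a y ∈ Icc (0 : ℝ) 1 := by
  have := hy.1; have := hy.2
  have hq : (0 : ℝ) ≤ 1 / (p + 1) := by positivity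
  unfold Tfun
  split_ifs with hya
  · have h₀ : 0 ≤ 1 - y / a := sub_nonneg.2 ((div_le_one ha₀).2 hya)
    have h₁ : 1 - y / a ≤ 1 := by linarith [div_nonneg hy.1 ha₀.le]
    have := rpow_nonneg h₀ (1 / (p + 1))
    have := rpow_le_one h₀ h₁ hq
    constructor <;> nlinarith
  · have h₀ : 0 ≤ (y - a) / (1 - a) := div_nonneg (by linarith) (by linarith)
    have h₁ : (y - a) / (1 - a) ≤ 1 := (div_le_one (by linarith)).2 (by linarith)
    have := rpow_nonneg h₀ (1 / (p + 1))
    have := rpow_le_one h₀ h₁ hq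
    constructor <;> nlinarith

lemma Tfun_self {p a : ℝ} (hp : p + 1 ≠ 0) (ha : a ≠ 0) : Tfun p a a = a := by
  simp [Tfun, ha, hp]

lemma Tfun_half_add {p ε : ℝ} (hε : 0 < ε) :
    Tfun p (1 / 2) (1 / 2 + ε) = 1 / 2 + 1 / 2 * (2 * ε) ^ (1 / (p + 1)) := by
  rw [Tfun, if_neg (by linarith), show (1 / 2 + ε - 1 / 2) / (1 - 1 / 2) = 2 * ε by ring]
  ring

lemma eventually_mul_rpow_add_lt_mul_rpow {q η c : ℝ} (C K : ℝ) (hK : 0 ≤ K) (hqη : q < η)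
    (hq : q < 1) (hc : 0 < c) :
    ∀ᶠ ε in 𝓝[>] (0 : ℝ), C * (K * ε) ^ η + ε < c * ε ^ q := by
  have hlim : Tendsto (fun ε : ℝ => C * K ^ η * ε ^ (η - q) + ε ^ (1 - q)) (𝓝[>] 0) (𝓝 0) := by
    have h : ContinuousAt (fun ε : ℝ => C * K ^ η * ε ^ (η - q) + ε ^ (1 - q)) 0 :=
      ((continuousAt_rpow_const 0 (η - q) (.inr (by linarith))).const_mul (C * K ^ η)).add
      (continuousAt_rpow_const 0 (1 - q) (.inr (by linarith)))
    simpa [zero_rpow (by linarith : η - q ≠ 0), zero_rpow (by linarith : 1 - q ≠ 0)]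
      using h.tendsto.mono_left nhdsWithin_le_nhds
  filter_upwards [hlim.eventually_lt_const hc, self_mem_nhdsWithin] with ε hlt (hε : 0 < ε)
  calc C * (K * ε) ^ η + ε = (C * K ^ η * ε ^ (η - q) + ε ^ (1 - q)) * ε ^ q := by
        rw [add_mul, mul_assoc, ← rpow_add hε, ← rpow_add hε, mul_rpow hK hε.le]
        simp only [sub_add_cancel, rpow_one]; ring
    _ < c * ε ^ q := mul_lt_mul_of_pos_right hlt (rpow_pos_of_pos hε q)

theorem stmt6_general (p η : ℝ) (hp : 1 < p) (hη₁ : 1 / (p + 1) < η) :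
    ∀ C > (0 : ℝ), ∃ a ∈ Set.Ioo (0 : ℝ) 1,
      C * (⨆ x : Set.Icc (0 : ℝ) 1, |gfun p a x.1 - gfun p (1 / 2) x.1|) ^ η <
        ⨆ y : Set.Icc (0 : ℝ) 1, |Tfun p a y.1 - Tfun p (1 / 2) y.1| := by
  intro C hC
  set q := 1 / (p + 1)
  have hq : q < 1 := by rw [div_lt_one (by linarith)]; linarith
  obtain ⟨ε, hlt, hε₀, hε⟩ := ((eventually_mul_rpow_add_lt_mul_rpow C (2 * p * (p + 1))
    (by positivity) hη₁ hq (by positivity : (0 : ℝ) < 1 / 2 * 2 ^ q)).and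
    (Ioo_mem_nhdsGT (by norm_num : (0 : ℝ) < 1 / 2))).exists
  have ha₀ : (0 : ℝ) < 1 / 2 + ε := by linarith
  have ha₁ : 1 / 2 + ε < 1 := by linarith
  refine ⟨1 / 2 + ε, ⟨ha₀, ha₁⟩, ?_⟩
  have hg : (⨆ x : Icc (0 : ℝ) 1, |gfun p (1 / 2 + ε) x.1 - gfun p (1 / 2) x.1|) ≤
      2 * p * (p + 1) * ε :=
    ciSup_le fun x => abs_gfun_sub_le hp.le hε₀.le hε x.2
  have hT_bdd : BddAbove (range fun y : Icc (0 : ℝ) 1 =>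
      |Tfun p (1 / 2 + ε) y.1 - Tfun p (1 / 2) y.1|) := by
    refine ⟨1, ?_⟩
    rintro _ ⟨y, rfl⟩
    have h₁ := Tfun_mem_Icc (p := p) (by linarith) ha₀ ha₁ y.2
    have h₂ := Tfun_mem_Icc (p := p) (by linarith) (by norm_num : (0 : ℝ) < 1 / 2)
      (by norm_num) y.2
    exact abs_sub_le_of_nonneg_of_le h₁.1 h₁.2 h₂.1 h₂.2
  have hT : 1 / 2 * (2 * ε) ^ q - ε ≤
      ⨆ y : Icc (0 : ℝ) 1, |Tfun p (1 / 2 + ε) y.1 - Tfun p (1 / 2) y.1| := by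
    refine le_ciSup_of_le hT_bdd ⟨1 / 2 + ε, by constructor <;> linarith⟩ ?_
    rw [Tfun_self (by linarith) ha₀.ne', Tfun_half_add hε₀, abs_sub_comm]
    exact le_of_eq_of_le (by ring) (le_abs_self _)
  calc C * (⨆ x : Icc (0 : ℝ) 1, |gfun p (1 / 2 + ε) x.1 - gfun p (1 / 2) x.1|) ^ η
      ≤ C * (2 * p * (p + 1) * ε) ^ η := by
        gcongr
        · exact Real.iSup_nonneg fun _ => abs_nonneg _
        · linarith [show 0 < q by positivity]
    _ < 1 / 2 * (2 * ε) ^ q - ε := by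
        rw [mul_rpow (by norm_num : (0 : ℝ) ≤ 2) hε₀.le]; linarith
    _ ≤ _ := hT

/-- For `p > 1` and `1/(p+1) < η < 1`, no uniform `η`-Hölder stability
estimate `‖T_a - T_{1/2}‖_{L^∞} ≤ C‖g_a - g_{1/2}‖_{L^∞}^η` can hold: for every `C > 0`
there is `a ∈ (0,1)` with
`sup_{y ∈ [0,1]} |T_a(y) - T_{1/2}(y)| > C·(sup_{x ∈ [0,1]} |g_a(x) - g_{1/2}(x)|)^η`. -/
theorem stmt6 (p η : ℝ) (hp : 1 < p) (hη₁ : 1 / (p + 1) < η) (hη₂ : η < 1) :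
    ∀ C > (0 : ℝ), ∃ a ∈ Set.Ioo (0 : ℝ) 1,
      C * (⨆ x : Set.Icc (0 : ℝ) 1, |gfun p a x.1 - gfun p (1 / 2) x.1|) ^ η <
        ⨆ y : Set.Icc (0 : ℝ) 1, |Tfun p a y.1 - Tfun p (1 / 2) y.1| :=
  stmt6_general p η hp hη₁
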